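/- arXiv:1808.01751 — 4 statements merged into one kernel-verified Lean document; each statement's English description precedes it below -/
import Mathlib

section
/- Let f be an entire function omitting 0 (f(z) ≠ 0 for all z) that is unbounded. Then there exist arbitrarily large R > 0 such that some point w_m on the circle |z| = R satisfies |f(w_m)| < 1. -/
open Asymptotics Filter

theorem Differentiable.exists_const_forall_eq_of_eventually_le_norm {E : Type*}
    [NormedAddCommGroup E] [NormedSpace ℂ E] {f : E → ℂ} (hf : Differentiable ℂ f)
    (h0 : ∀ z, f z ≠ 0) {c : ℝ} (hc : 0 < c) (hfc : ∀ᶠ z in cocompact E, c ≤ ‖f z‖) :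
    ∃ a, ∀ z, f z = a := by
  have hinv : Differentiable ℂ fun z => (f z)⁻¹ := hf.inv h0
  have hinv_isBigO : (fun z => (f z)⁻¹) =O[cocompact E] (1 : E → ℝ) :=
    isBigO_iff.2 ⟨c⁻¹, hfc.mono fun z hz => by
      simpa only [norm_inv, Pi.one_apply, norm_one, mul_one] using inv_anti₀ hc hz⟩
  obtain ⟨a, ha⟩ := hinv.exists_const_forall_eq_of_bounded
    (hinv.continuous.isBounded_range_iff_isBigO.2 hinv_isBigO)
  exact ⟨a⁻¹, fun z => by rw [← ha z, inv_inv]⟩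

/-- An unbounded entire function omitting 0 has points of small modulus (`|f| < 1`)
on arbitrarily large circles. -/
theorem unbounded_nonvanishing_small_on_large_circles
    (f : ℂ → ℂ) (hf : Differentiable ℂ f) (h0 : ∀ z, f z ≠ 0)
    (hub : ¬BddAbove (Set.range fun z => ‖f z‖)) :
    ∀ R₀ : ℝ, 0 < R₀ →
      ∃ R : ℝ, R₀ < R ∧ ∃ w : ℂ, ‖w‖ = R ∧ ‖f w‖ < 1 := by
  intro R₀ _
  by_contra! hcircles
  have hfar : ∀ᶠ z in cocompact ℂ, 1 ≤ ‖f z‖ :=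
    (tendsto_norm_cocompact_atTop.eventually_gt_atTop R₀).mono fun z hz => hcircles _ hz z rfl
  obtain ⟨a, ha⟩ := hf.exists_const_forall_eq_of_eventually_le_norm h0 one_pos hfar
  exact hub ⟨‖a‖, by rintro _ ⟨z, rfl⟩; simp only [ha, le_refl]⟩
end

section
/- Let f : ℂ → ℂ be an entire nonconstant function with f(z) ≠ 0 for all z, and suppose 1/f is also unbounded. Then for every R₀ > 0 there exists R > R₀ such that the circle {|z| = R} contains a point w_m with |f(w_m)| < 1 and a point w_M with |f(w_M)| > 1. -/
/-!
By the maximum modulus principle, an entire function that exceeds `C` in norm somewhere inside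
the closed ball of radius `R` exceeds `C` somewhere on the sphere of radius `R`. Since `f` and
`1 / f` are unbounded entire functions, each exceeds `1` somewhere on every sufficiently large
sphere, and `‖1 / f w‖ > 1` means `‖f w‖ < 1`.
-/

open Filter Metric

variable {E F : Type*} [NormedAddCommGroup E] [NormedSpace ℂ E] [Nontrivial E]
  [NormedAddCommGroup F] [NormedSpace ℂ F]

theorem Differentiable.exists_norm_eq_lt_norm_apply {g : E → F} (hg : Differentiable ℂ g)
    {R C : ℝ} (hR : 0 < R) {z : E} (hz : ‖z‖ ≤ R) (hC : C < ‖g z‖) :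
    ∃ w : E, ‖w‖ = R ∧ C < ‖g w‖ := by
  by_contra! hsphere
  refine hC.not_ge (Complex.norm_le_of_forall_mem_frontier_norm_le
    (isBounded_ball (x := 0) (r := R)) hg.diffContOnCl (fun w hw => hsphere w ?_) ?_)
  · simpa [frontier_ball _ hR.ne'] using hw
  · simpa [closure_ball _ hR.ne'] using hz

theorem Differentiable.eventually_exists_norm_eq_lt_norm_apply {g : E → F}
    (hg : Differentiable ℂ g) (hub : ¬BddAbove (Set.range fun z => ‖g z‖)) (C : ℝ) :
    ∀ᶠ R in atTop, ∃ w : E, ‖w‖ = R ∧ C < ‖g w‖ := by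
  obtain ⟨_, ⟨z, rfl⟩, hz⟩ := not_bddAbove_iff.1 hub C
  filter_upwards [eventually_ge_atTop ‖z‖, eventually_gt_atTop 0] with R hzR hR
  exact hg.exists_norm_eq_lt_norm_apply hR hzR hz

theorem both_small_and_large_on_one_circle_general
    (f : ℂ → ℂ) (hf : Differentiable ℂ f) (h0 : ∀ z, f z ≠ 0)
    (hub : ¬BddAbove (Set.range fun z => ‖f z‖))
    (hub' : ¬BddAbove (Set.range fun z => ‖1 / f z‖)) :
    ∀ R₀ : ℝ, 0 < R₀ →
      ∃ R : ℝ, R₀ < R ∧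
        (∃ wm : ℂ, ‖wm‖ = R ∧ ‖f wm‖ < 1) ∧
        (∃ wM : ℂ, ‖wM‖ = R ∧ 1 < ‖f wM‖) := by
  intro R₀ _
  have hinv : Differentiable ℂ fun z => 1 / f z := (differentiable_const 1).div hf h0
  obtain ⟨R, hR₀R, ⟨wm, hwm, hsmall⟩, hlarge⟩ := ((eventually_gt_atTop R₀).and
    ((hinv.eventually_exists_norm_eq_lt_norm_apply hub' 1).and
      (hf.eventually_exists_norm_eq_lt_norm_apply hub 1))).exists
  refine ⟨R, hR₀R, ⟨wm, hwm, ?_⟩, hlarge⟩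
  rwa [norm_div, norm_one, one_lt_div (norm_pos_iff.2 (h0 wm))] at hsmall

/-- If `f` is entire, nonvanishing, nonconstant, and both `f` and `1/f` are unbounded,
then on arbitrarily large circles there are simultaneously points with `|f| < 1`
and points with `|f| > 1`. -/
theorem both_small_and_large_on_one_circle
    (f : ℂ → ℂ) (hf : Differentiable ℂ f) (h0 : ∀ z, f z ≠ 0)
    (hnc : ¬∃ c : ℂ, ∀ z, f z = c)
    (hub : ¬BddAbove (Set.range fun z => ‖f z‖))
    (hub' : ¬BddAbove (Set.range fun z => ‖1 / f z‖)) :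
    ∀ R₀ : ℝ, 0 < R₀ →
      ∃ R : ℝ, R₀ < R ∧
        (∃ wm : ℂ, ‖wm‖ = R ∧ ‖f wm‖ < 1) ∧
        (∃ wM : ℂ, ‖wM‖ = R ∧ 1 < ‖f wM‖) :=
  both_small_and_large_on_one_circle_general f hf h0 hub hub'
end

section
/- Let (Y,d) be a metric space, f : Y → Y, and A ⊆ Y with f-preimage multiplicity as follows: there exist n ≥ 1 and δ > 0 such that every point w ∈ A has at least n preimages z₁, …, zₙ ∈ A under f with pairwise distances d(zᵢ, zⱼ) > δ for i ≠ j. Then for every j ≥ 0 there exists a finite set E_j ⊆ A of cardinality n^j such that E_j is (j, δ)-separated: every point of E_j has its first j iterates under f contained in A, and for any two distinct points z ≠ w in E_j there exists k ≤ j − 1 with d(f^k(z), f^k(w)) > δ. -/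
/-- If every point of `A` has at least `n` preimages in `A` under `f`, pairwise at
distance `> δ`, then for every `j` there is a `(j,δ)`-separated subset of `A`
of cardinality exactly `n^j`. -/
theorem separated_sets_from_branching
    {Y : Type*} [MetricSpace Y] (f : Y → Y) (A : Set Y)
    (n : ℕ) (hn : 1 ≤ n) (δ : ℝ) (hδ : 0 < δ)
    (hbranch : ∀ w ∈ A, ∃ z : Fin n → Y,
      (∀ i, z i ∈ A ∧ f (z i) = w) ∧
      ∀ i j, i ≠ j → δ < dist (z i) (z j))
    (hA : A.Nonempty) :
    ∀ j : ℕ, ∃ E : Finset Y, E.card = n ^ j ∧ ↑E ⊆ A ∧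
      (∀ z ∈ E, ∀ k < j, f^[k] z ∈ A) ∧
      (∀ z ∈ E, ∀ w ∈ E, z ≠ w → ∃ k < j, δ < dist (f^[k] z) (f^[k] w)) := by
  classical
  intro j
  induction j with
  | zero =>
    obtain ⟨a, ha⟩ := hA
    exact ⟨{a}, by simp, by simp [ha], by simp, by simp⟩
  | succ j ih =>
    obtain ⟨E, hcard, hEA, horb, hsep⟩ := ih
    have key : ∀ w ∈ E, ∃ z : Fin n → Y,
        (∀ i, z i ∈ A ∧ f (z i) = w) ∧ ∀ i j, i ≠ j → δ < dist (z i) (z j) :=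
      fun w hw => hbranch w (hEA hw)
    choose! Z hZ hZsep using key
    set E' := E.biUnion (fun w => Finset.image (Z w) Finset.univ) with hE'
    have memE' : ∀ x, x ∈ E' ↔ ∃ w ∈ E, ∃ i, Z w i = x := by
      intro x; simp [hE']
    have Zinj : ∀ w ∈ E, Function.Injective (Z w) := by
      intro w hw i i' h
      by_contra hne
      have h1 := hZsep w hw i i' hne
      rw [h] at h1
      simp at h1
      linarith
    have hcard' : E'.card = n ^ (j + 1) := by
      rw [hE', Finset.card_biUnion]
      · have : ∀ w ∈ E, (Finset.image (Z w) Finset.univ).card = n := by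
          intro w hw
          rw [Finset.card_image_of_injective _ (Zinj w hw), Finset.card_univ,
            Fintype.card_fin]
        rw [Finset.sum_congr rfl this, Finset.sum_const, smul_eq_mul, hcard,
          pow_succ]
      · intro w hw w' hw' hne
        simp only [Finset.disjoint_left, Finset.mem_image, Finset.mem_univ,
          true_and]
        rintro x ⟨i, rfl⟩ ⟨i', hi'⟩
        apply hne
        have e1 := (hZ w hw i).2
        have e2 := (hZ w' hw' i').2
        rw [hi'] at e2
        rw [← e1, ← e2]
    refine ⟨E', hcard', ?_, ?_, ?_⟩
    · intro x hx
      obtain ⟨w, hw, i, rfl⟩ := (memE' x).1 (by exact_mod_cast hx)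
      exact (hZ w hw i).1
    · intro z hz k hk
      obtain ⟨w, hw, i, rfl⟩ := (memE' z).1 hz
      match k with
      | 0 => exact (hZ w hw i).1
      | k + 1 =>
        rw [Function.iterate_succ_apply, (hZ w hw i).2]
        exact horb w hw k (by omega)
    · intro z hz w hw hne
      obtain ⟨p, hp, i, rfl⟩ := (memE' z).1 hz
      obtain ⟨q, hq, i', rfl⟩ := (memE' w).1 hw
      by_cases hpq : p = q
      · subst hpq
        refine ⟨0, by omega, ?_⟩
        simp only [Function.iterate_zero_apply]
        exact hZsep p hp i i' (fun h => hne (by rw [h]))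
      · obtain ⟨k, hk, hd⟩ := hsep p hp q hq hpq
        refine ⟨k + 1, by omega, ?_⟩
        rw [Function.iterate_succ_apply, Function.iterate_succ_apply,
          (hZ p hp i).2, (hZ q hq i').2]
        exact hd
end

section
/- Let n ≥ 1, δ > 0, and suppose A ⊆ ℂ is a set such that every w ∈ A has at least n preimages in A under f : ℂ → ℂ, pairwise δ-separated. Then for every j, the maximal cardinality K(j, δ) of a (j,δ)-separated subset of the closure of A (assumed compact, with f continuous on it) satisfies K(j,δ) ≥ n^j, and hence limsup_{j→∞} (1/j) log K(j,δ) ≥ log n. -/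
open Filter

/-- `(j,δ)`-separated subset of `X` for `f`. -/
def IsSeparatedSet (f : ℂ → ℂ) (X : Set ℂ) (j : ℕ) (δ : ℝ) (E : Set ℂ) : Prop :=
  E ⊆ X ∧ (∀ z ∈ E, ∀ k < j, f^[k] z ∈ X) ∧
    ∀ z ∈ E, ∀ w ∈ E, z ≠ w → ∃ k < j, δ < dist (f^[k] z) (f^[k] w)

/-- `K(j,δ)`: maximal cardinality of a `(j,δ)`-separated subset of `X`. -/
noncomputable def maxSepCard (f : ℂ → ℂ) (X : Set ℂ) (j : ℕ) (δ : ℝ) : ℕ :=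
  sSup {m : ℕ | ∃ E : Finset ℂ, IsSeparatedSet f X j δ ↑E ∧ E.card = m}

/-
Lower bound: choosing `n` separated preimages of each point of a `(j,δ)`-separated subset
of `A` gives a `(j+1,δ)`-separated subset of `A` of `n` times the size; two of its points
are separated either at time `0` (same image) or one step after their images are.
Upper bound: coding each point of a `(j,δ)`-separated set by the `δ/2`-balls of a finite
cover of the compact closure visited by its first `j` iterates is injective, so
`K(j,δ) ≤ N^j` with `N` the size of the cover; this keeps the limsup finite.
Together, `j log n ≤ log K(j,δ) ≤ j log N`, which bounds the limsup from below.
-/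

open Metric Real

section Counting

variable {α β ι : Type*} [PseudoMetricSpace α] [Fintype ι]

theorem card_le_card_pow_of_forall_exists_lt_dist {X : Set α} {δ : ℝ} {t : Finset α}
    (ht : X ⊆ ⋃ y ∈ t, ball y (δ / 2)) {E : Finset β} (φ : β → ι → α)
    (hφX : ∀ z ∈ E, ∀ i, φ z i ∈ X)
    (hsep : ∀ z ∈ E, ∀ w ∈ E, z ≠ w → ∃ i, δ < dist (φ z i) (φ w i)) :
    E.card ≤ t.card ^ Fintype.card ι := by
  classical
  have hcenter : ∀ (z : E) (i : ι), ∃ y : t, dist (φ z i) y < δ / 2 := fun z i => by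
    obtain ⟨y, hy, hzy⟩ := Set.mem_iUnion₂.1 (ht (hφX z z.2 i))
    exact ⟨⟨y, hy⟩, hzy⟩
  choose code hcode using hcenter
  have hinj : Function.Injective code := by
    intro z w hzw
    by_contra hne
    obtain ⟨i, hi⟩ := hsep z z.2 w w.2 (Subtype.coe_ne_coe.2 hne)
    have hw := hcode w i
    rw [← hzw] at hw
    linarith [dist_triangle_right (φ z i) (φ w i) (code z i), hcode z i]
  simpa using Fintype.card_le_of_injective code hinj

end Counting

theorem log_natCast_le_log_natCast {a b : ℕ} (hab : a ≤ b) : log a ≤ log b := by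
  rcases a.eq_zero_or_pos with rfl | ha
  · simpa using log_natCast_nonneg b
  · exact log_le_log (by positivity) (by exact_mod_cast hab)

theorem log_le_limsup_log_div {n N : ℕ} {K : ℕ → ℕ} (hlower : ∀ j, n ^ j ≤ K j)
    (hupper : ∀ j, K j ≤ N ^ j) :
    log n ≤ limsup (fun j : ℕ => log (K j) / j) atTop := by
  have hlog : ∀ j : ℕ, j * log n ≤ log (K j) ∧ log (K j) ≤ j * log N := fun j => by
    rw [← log_pow, ← log_pow]
    exact_mod_cast And.intro (log_natCast_le_log_natCast (hlower j))
      (log_natCast_le_log_natCast (hupper j))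
  have hj : ∀ᶠ j : ℕ in atTop, (0 : ℝ) < j :=
    eventually_atTop.2 ⟨1, fun j hj => by exact_mod_cast hj⟩
  refine le_limsup_of_frequently_le (hj.mono fun j hj => ?_).frequently
    ⟨log N, eventually_map.2 (hj.mono fun j hj => ?_)⟩
  · rw [le_div_iff₀ hj, mul_comm]
    exact (hlog j).1
  · change log (K j) / j ≤ log N
    rw [div_le_iff₀ hj, mul_comm]
    exact (hlog j).2

namespace IsSeparatedSet

variable {f : ℂ → ℂ} {X : Set ℂ} {j : ℕ} {δ : ℝ} {E : Set ℂ}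

theorem mono {Y : Set ℂ} (hE : IsSeparatedSet f X j δ E) (hXY : X ⊆ Y) :
    IsSeparatedSet f Y j δ E :=
  ⟨hE.1.trans hXY, fun z hz k hk => hXY (hE.2.1 z hz k hk), hE.2.2⟩

theorem _root_.isSeparatedSet_zero_singleton {a : ℂ} (ha : a ∈ X) :
    IsSeparatedSet f X 0 δ {a} := by
  refine ⟨Set.singleton_subset_iff.2 ha, fun _ _ k hk => absurd hk k.not_lt_zero, ?_⟩
  rintro z rfl w rfl hne
  exact absurd rfl hne

theorem succ_of_mapsTo {E' : Set ℂ} (hE : IsSeparatedSet f X j δ E) (hE'X : E' ⊆ X)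
    (hmaps : Set.MapsTo f E' E)
    (hfiber : ∀ x ∈ E', ∀ y ∈ E', x ≠ y → f x = f y → δ < dist x y) :
    IsSeparatedSet f X (j + 1) δ E' := by
  refine ⟨hE'X, fun x hx k hk => ?_, fun x hx y hy hne => ?_⟩
  · cases k with
    | zero => exact hE'X hx
    | succ k => exact Function.iterate_succ_apply f k x ▸ hE.2.1 _ (hmaps hx) k (by omega)
  · by_cases hxy : f x = f y
    · exact ⟨0, j.succ_pos, hfiber x hx y hy hne hxy⟩
    · obtain ⟨k, hk, hsep⟩ := hE.2.2 _ (hmaps hx) _ (hmaps hy) hxy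
      exact ⟨k + 1, by omega, by simpa only [Function.iterate_succ_apply] using hsep⟩

theorem card_le_pow {t : Finset ℂ} (ht : X ⊆ ⋃ y ∈ t, ball y (δ / 2)) {E : Finset ℂ}
    (hE : IsSeparatedSet f X j δ E) : E.card ≤ t.card ^ j := by
  simpa using card_le_card_pow_of_forall_exists_lt_dist ht (fun z (k : Fin j) => f^[k] z)
    (fun z hz k => hE.2.1 z hz k k.2)
    (fun z hz w hw hne => let ⟨k, hk, hsep⟩ := hE.2.2 z hz w hw hne; ⟨⟨k, hk⟩, hsep⟩)

end IsSeparatedSet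

section maxSepCard

variable {f : ℂ → ℂ} {X : Set ℂ} {δ : ℝ}

theorem exists_forall_isSeparatedSet_card_le_pow (hX : TotallyBounded X) (hδ : 0 < δ) :
    ∃ N : ℕ, ∀ j (E : Finset ℂ), IsSeparatedSet f X j δ E → E.card ≤ N ^ j := by
  obtain ⟨t, htfin, ht⟩ := totallyBounded_iff.1 hX (δ / 2) (half_pos hδ)
  exact ⟨htfin.toFinset.card, fun j E hE => hE.card_le_pow (by simpa using ht)⟩

theorem maxSepCard_le_of_forall_card_le {j : ℕ} {N : ℕ}
    (hN : ∀ E : Finset ℂ, IsSeparatedSet f X j δ E → E.card ≤ N) :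
    maxSepCard f X j δ ≤ N :=
  csSup_le' (by rintro _ ⟨E, hE, rfl⟩; exact hN E hE)

-- `hN` is needed: `sSup` of an unbounded set of naturals is `0`.
theorem IsSeparatedSet.card_le_maxSepCard {j : ℕ} {N : ℕ}
    (hN : ∀ E : Finset ℂ, IsSeparatedSet f X j δ E → E.card ≤ N) {E : Finset ℂ}
    (hE : IsSeparatedSet f X j δ E) : E.card ≤ maxSepCard f X j δ :=
  le_csSup ⟨N, by rintro _ ⟨E, hE, rfl⟩; exact hN E hE⟩ ⟨E, hE, rfl⟩

end maxSepCard

theorem IsSeparatedSet.exists_succ_card_eq_mul {f : ℂ → ℂ} {A : Set ℂ} {n j : ℕ}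
    {δ : ℝ} (hδ : 0 ≤ δ) (hbranch : ∀ w ∈ A, ∃ z : Fin n → ℂ,
      (∀ i, z i ∈ A ∧ f (z i) = w) ∧ ∀ i j, i ≠ j → δ < ‖z i - z j‖)
    {E : Finset ℂ} (hE : IsSeparatedSet f A j δ E) :
    ∃ E' : Finset ℂ, IsSeparatedSet f A (j + 1) δ E' ∧ E'.card = E.card * n := by
  classical
  choose! z hz hzsep using hbranch
  have hzE : ∀ w ∈ E, ∀ i, z w i ∈ A ∧ f (z w i) = w := fun w hw => hz w (hE.1 hw)
  set E' := (E ×ˢ (Finset.univ : Finset (Fin n))).image (fun p => z p.1 p.2)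
  have hmem : ∀ x ∈ E', ∃ w ∈ E, ∃ i, z w i = x := by simp [E']
  have hinj : Set.InjOn (fun p : ℂ × Fin n => z p.1 p.2)
      ↑(E ×ˢ (Finset.univ : Finset (Fin n))) := by
    rintro ⟨w, i⟩ hwi ⟨w', i'⟩ hwi' (heq : z w i = z w' i')
    simp only [Finset.coe_product, Set.mem_prod, Finset.mem_coe] at hwi hwi'
    obtain rfl : w = w' := by rw [← (hzE w hwi.1 i).2, ← (hzE w' hwi'.1 i').2, heq]
    by_contra hii
    have := hzsep w (hE.1 hwi.1) i i' (by simpa using hii)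
    rw [heq, sub_self, norm_zero] at this
    exact hδ.not_gt this
  refine ⟨E', hE.succ_of_mapsTo ?_ ?_ ?_, ?_⟩
  · intro x hx
    obtain ⟨w, hw, i, rfl⟩ := hmem x hx
    exact (hzE w hw i).1
  · intro x hx
    obtain ⟨w, hw, i, rfl⟩ := hmem x hx
    simpa [(hzE w hw i).2] using hw
  · intro x hx y hy hne hfxy
    obtain ⟨w, hw, i, rfl⟩ := hmem x hx
    obtain ⟨w', hw', i', rfl⟩ := hmem y hy
    obtain rfl : w = w' := by rwa [(hzE w hw i).2, (hzE w' hw' i').2] at hfxy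
    rw [Complex.dist_eq]
    exact hzsep w (hE.1 hw) i i' fun hii => hne (hii ▸ rfl)
  · rw [Finset.card_image_of_injOn hinj, Finset.card_product, Finset.card_univ,
      Fintype.card_fin]

theorem exists_isSeparatedSet_card_eq_pow {f : ℂ → ℂ} {A : Set ℂ} (hA : A.Nonempty)
    {n : ℕ} {δ : ℝ} (hδ : 0 ≤ δ)
    (hbranch : ∀ w ∈ A, ∃ z : Fin n → ℂ,
      (∀ i, z i ∈ A ∧ f (z i) = w) ∧ ∀ i j, i ≠ j → δ < ‖z i - z j‖) (j : ℕ) :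
    ∃ E : Finset ℂ, IsSeparatedSet f A j δ E ∧ E.card = n ^ j := by
  induction j with
  | zero =>
    obtain ⟨a, ha⟩ := hA
    exact ⟨{a}, by simpa using isSeparatedSet_zero_singleton ha, by simp⟩
  | succ j ih =>
    obtain ⟨E, hE, hcard⟩ := ih
    obtain ⟨E', hE', hcard'⟩ := hE.exists_succ_card_eq_mul hδ hbranch
    exact ⟨E', hE', by rw [hcard', hcard, pow_succ]⟩

theorem maxSepCard_ge_pow_of_branching_general
    (f : ℂ → ℂ) (A : Set ℂ) (hA : A.Nonempty)
    (hX : IsCompact (closure A))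
    (n : ℕ) (δ : ℝ) (hδ : 0 < δ)
    (hbranch : ∀ w ∈ A, ∃ z : Fin n → ℂ,
      (∀ i, z i ∈ A ∧ f (z i) = w) ∧
      ∀ i j, i ≠ j → δ < ‖z i - z j‖) :
    (∀ j : ℕ, n ^ j ≤ maxSepCard f (closure A) j δ) ∧
    Real.log n ≤
      limsup (fun j : ℕ => Real.log (maxSepCard f (closure A) j δ) / j) atTop := by
  obtain ⟨N, hN⟩ := exists_forall_isSeparatedSet_card_le_pow (f := f) hX.totallyBounded hδ
  have hlower : ∀ j, n ^ j ≤ maxSepCard f (closure A) j δ := fun j => by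
    obtain ⟨E, hE, hcard⟩ := exists_isSeparatedSet_card_eq_pow hA hδ.le hbranch j
    exact hcard ▸ (hE.mono subset_closure).card_le_maxSepCard (hN j)
  exact ⟨hlower, log_le_limsup_log_div hlower fun j => maxSepCard_le_of_forall_card_le (hN j)⟩

/-- If every point of `A` has at least `n` preimages in `A` under `f`, pairwise at
distance `> δ`, then `K(j,δ) ≥ n^j` on the compact closure of `A`, and hence
`limsup (1/j) log K(j,δ) ≥ log n`. -/
theorem maxSepCard_ge_pow_of_branching
    (f : ℂ → ℂ) (hf : Continuous f) (A : Set ℂ) (hA : A.Nonempty)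
    (hX : IsCompact (closure A))
    (n : ℕ) (hn : 1 ≤ n) (δ : ℝ) (hδ : 0 < δ)
    (hbranch : ∀ w ∈ A, ∃ z : Fin n → ℂ,
      (∀ i, z i ∈ A ∧ f (z i) = w) ∧
      ∀ i j, i ≠ j → δ < ‖z i - z j‖) :
    (∀ j : ℕ, n ^ j ≤ maxSepCard f (closure A) j δ) ∧
    Real.log n ≤
      limsup (fun j : ℕ => Real.log (maxSepCard f (closure A) j δ) / j) atTop :=
  maxSepCard_ge_pow_of_branching_general f A hA hX n δ hδ hbranch
end
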